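/- On CFK^∞(11n_57), the F2[U,U^{-1}]-linear map ι defined on generators by ι(a) = U^{-4}q, ι(b) = U^{-3}n, ι(c) = U^{-3}o, ι(d) = U^{-3}p, ι(e) = U^{-1}k + U^{-2}m, ι(f) = U^{-2}l, ι(g) = U^{-1}k, ι(h) = h + i, ι(i) = i, ι(j) = j + h, ι(k) = Ug, ι(l) = U^2 f, ι(m) = U^2 e + U^2 g, ι(n) = U^3 b, ι(o) = U^3 c, ι(p) = U^3 d + U^3 b, ι(q) = U^4 a is a chain map (ι∂ = ∂ι) that preserves the homological grading M, every term of ι(y) has planar coordinates coordinatewise ≤ the transpose (j,i) of the planar coordinates (i,j) of y (ι is skew-filtered), and ι^2 = σ, where σ is the Sarkar map of this complex, given by σ(d) = d + b, σ(j) = j + i, σ(p) = p + n, and σ = Id on all other generators. In particular ι^4 = Id. -/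

import Mathlib

/- STATEMENT 8: on CFK^∞(11n_57), the map ι given below is a
grading-preserving, skew-filtered chain map with ι² = σ (the Sarkar map,
given by σ(d) = d + b, σ(j) = j + i, σ(p) = p + n and σ = Id on the other
generators); in particular ι⁴ = Id. -/

open LaurentPolynomial

noncomputable section

/-- F2[U, U⁻¹] -/
abbrev L2 : Type := LaurentPolynomial (ZMod 2)

/-- the variable U = T 1 -/
def UL : L2 := T 1

/-- the i-th free generator -/
def gen {n : ℕ} (i : Fin n) : Fin n → L2 := Pi.single i 1

/-- the F2[U,U⁻¹]-linear map sending the i-th generator to `v i` -/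
def mkL {n : ℕ} (v : Fin n → (Fin n → L2)) : (Fin n → L2) →ₗ[L2] (Fin n → L2) :=
  (Pi.basisFun L2 (Fin n)).constr ℕ v

/-- `x` is homogeneous of homological degree `r`: it is an F2-combination of
elements U^k·(i-th generator) with M i - 2k = r. -/
def HomogL {n : ℕ} (M : Fin n → ℤ) (r : ℤ) (x : Fin n → L2) : Prop :=
  x ∈ Submodule.span (ZMod 2)
    {v : Fin n → L2 | ∃ (i : Fin n) (k : ℤ), M i - 2 * k = r ∧ v = (T k : L2) • gen i}

/-- every term of `x` has planar coordinates coordinatewise ≤ `st`, where the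
i-th generator sits at `P i` and U lowers both coordinates by 1. -/
def BelowL {n : ℕ} (P : Fin n → ℤ × ℤ) (st : ℤ × ℤ) (x : Fin n → L2) : Prop :=
  x ∈ Submodule.span (ZMod 2)
    {v : Fin n → L2 | ∃ (i : Fin n) (k : ℤ),
      (P i).1 - k ≤ st.1 ∧ (P i).2 - k ≤ st.2 ∧ v = (T k : L2) • gen i}

/- generators of CFK^∞(11n_57):
   a = 0, b = 1, c = 2, d = 3, e = 4, f = 5, g = 6, h = 7, i = 8, j = 9,
   k = 10, l = 11, m = 12, n = 13, o = 14, p = 15, q = 16 -/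

/-- the differential of CFK^∞(11n_57) -/
def d : (Fin 17 → L2) →ₗ[L2] (Fin 17 → L2) :=
  mkL ![gen 1, 0, 0, UL • gen 0 + gen 5, UL • gen 2 + gen 7, UL • gen 1,
        gen 8, 0, 0, UL • gen 6 + gen 10, UL • gen 8, gen 13,
        UL ^ 2 • gen 7 + gen 14, 0, 0, UL • gen 11 + gen 16, UL • gen 13]

/-- homological gradings -/
def M : Fin 17 → ℤ :=
  ![1, 0, 0, 0, -1, -1, -1, -2, -2, -2, -3, -5, -5, -6, -6, -6, -7]

/-- planar bigradings -/
def P : Fin 17 → ℤ × ℤ :=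
  ![(0, 4), (0, 3), (0, 3), (0, 3), (0, 2), (0, 2), (0, 1), (0, 0), (0, 0),
    (0, 0), (0, -1), (0, -2), (0, -2), (0, -3), (0, -3), (0, -3), (0, -4)]

/-- the map ι -/
def iota : (Fin 17 → L2) →ₗ[L2] (Fin 17 → L2) :=
  mkL ![(T (-4) : L2) • gen 16,                       -- ι(a) = U⁻⁴q
        (T (-3) : L2) • gen 13,                       -- ι(b) = U⁻³n
        (T (-3) : L2) • gen 14,                       -- ι(c) = U⁻³o
        (T (-3) : L2) • gen 15,                       -- ι(d) = U⁻³p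
        (T (-1) : L2) • gen 10 + (T (-2) : L2) • gen 12,  -- ι(e) = U⁻¹k + U⁻²m
        (T (-2) : L2) • gen 11,                       -- ι(f) = U⁻²l
        (T (-1) : L2) • gen 10,                       -- ι(g) = U⁻¹k
        gen 7 + gen 8,                                -- ι(h) = h + i
        gen 8,                                        -- ι(i) = i
        gen 9 + gen 7,                                -- ι(j) = j + h
        UL • gen 6,                                   -- ι(k) = Ug
        UL ^ 2 • gen 5,                               -- ι(l) = U²f
        UL ^ 2 • gen 4 + UL ^ 2 • gen 6,              -- ι(m) = U²e + U²g
        UL ^ 3 • gen 1,                               -- ι(n) = U³b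
        UL ^ 3 • gen 2,                               -- ι(o) = U³c
        UL ^ 3 • gen 3 + UL ^ 3 • gen 1,              -- ι(p) = U³d + U³b
        UL ^ 4 • gen 0]                               -- ι(q) = U⁴a

/-- Φ = Σ_{p odd} ∂_{p0} -/
def Phi : (Fin 17 → L2) →ₗ[L2] (Fin 17 → L2) :=
  mkL ![0, 0, 0, UL • gen 0, UL • gen 2, UL • gen 1, 0, 0, 0,
        UL • gen 6, UL • gen 8, 0, 0, 0, 0, UL • gen 11, UL • gen 13]

/-- Ψ = Σ_{q odd} ∂_{0q} -/
def Psi : (Fin 17 → L2) →ₗ[L2] (Fin 17 → L2) :=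
  mkL ![gen 1, 0, 0, gen 5, 0, 0, gen 8, 0, 0, gen 10, 0, gen 13, gen 14,
        0, 0, gen 16, 0]

/-- the Sarkar map σ = Id + U⁻¹(Φ ∘ Ψ) -/
def sigma : (Fin 17 → L2) →ₗ[L2] (Fin 17 → L2) :=
  LinearMap.id + (T (-1) : L2) • (Phi ∘ₗ Psi)


-- ===== auxiliary lemmas =====

lemma basisFun_eq_gen {n : ℕ} (i : Fin n) : Pi.basisFun L2 (Fin n) i = gen i := by
  rw [Pi.basisFun_apply]; rfl

lemma mkL_gen {n : ℕ} (v : Fin n → (Fin n → L2)) (i : Fin n) : mkL v (gen i) = v i := by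
  rw [mkL, ← basisFun_eq_gen, Module.Basis.constr_basis]

lemma lext {n : ℕ} {f g : (Fin n → L2) →ₗ[L2] (Fin n → L2)}
    (h : ∀ i, f (gen i) = g (gen i)) : f = g :=
  (Pi.basisFun L2 (Fin n)).ext (by simpa [basisFun_eq_gen, gen] using h)

lemma two_L2 : (2 : L2) = 0 := by
  have h : ((1:L2) + 1) = 0 := by
    rw [← map_one (algebraMap (ZMod 2) L2), ← map_add]
    rw [show (1:ZMod 2) + 1 = 0 by decide, map_zero]
  rw [← one_add_one_eq_two, h]

lemma A2 {n : ℕ} (x : Fin n → L2) : x + x = 0 := by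
  rw [← two_smul L2 x, two_L2, zero_smul]

lemma TT (a b : ℤ) {n : ℕ} (x : Fin n → L2) :
    (T a : L2) • (T b : L2) • x = (T (a+b) : L2) • x := by
  rw [smul_smul, ← T_add]

@[simp] lemma dE0 : d (gen 0) = gen 1 := by simp only [d, mkL_gen]; exact rfl
@[simp] lemma dE1 : d (gen 1) = 0 := by simp only [d, mkL_gen]; exact rfl
@[simp] lemma dE2 : d (gen 2) = 0 := by simp only [d, mkL_gen]; exact rfl
@[simp] lemma dE3 : d (gen 3) = UL • gen 0 + gen 5 := by simp only [d, mkL_gen]; exact rfl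
@[simp] lemma dE4 : d (gen 4) = UL • gen 2 + gen 7 := by simp only [d, mkL_gen]; exact rfl
@[simp] lemma dE5 : d (gen 5) = UL • gen 1 := by simp only [d, mkL_gen]; exact rfl
@[simp] lemma dE6 : d (gen 6) = gen 8 := by simp only [d, mkL_gen]; exact rfl
@[simp] lemma dE7 : d (gen 7) = 0 := by simp only [d, mkL_gen]; exact rfl
@[simp] lemma dE8 : d (gen 8) = 0 := by simp only [d, mkL_gen]; exact rfl
@[simp] lemma dE9 : d (gen 9) = UL • gen 6 + gen 10 := by simp only [d, mkL_gen]; exact rfl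
@[simp] lemma dE10 : d (gen 10) = UL • gen 8 := by simp only [d, mkL_gen]; exact rfl
@[simp] lemma dE11 : d (gen 11) = gen 13 := by simp only [d, mkL_gen]; exact rfl
@[simp] lemma dE12 : d (gen 12) = UL ^ 2 • gen 7 + gen 14 := by simp only [d, mkL_gen]; exact rfl
@[simp] lemma dE13 : d (gen 13) = 0 := by simp only [d, mkL_gen]; exact rfl
@[simp] lemma dE14 : d (gen 14) = 0 := by simp only [d, mkL_gen]; exact rfl
@[simp] lemma dE15 : d (gen 15) = UL • gen 11 + gen 16 := by simp only [d, mkL_gen]; exact rfl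
@[simp] lemma dE16 : d (gen 16) = UL • gen 13 := by simp only [d, mkL_gen]; exact rfl
@[simp] lemma iotaE0 : iota (gen 0) = (T (-4) : L2) • gen 16 := by simp only [iota, mkL_gen]; exact rfl
@[simp] lemma iotaE1 : iota (gen 1) = (T (-3) : L2) • gen 13 := by simp only [iota, mkL_gen]; exact rfl
@[simp] lemma iotaE2 : iota (gen 2) = (T (-3) : L2) • gen 14 := by simp only [iota, mkL_gen]; exact rfl
@[simp] lemma iotaE3 : iota (gen 3) = (T (-3) : L2) • gen 15 := by simp only [iota, mkL_gen]; exact rfl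
@[simp] lemma iotaE4 : iota (gen 4) = (T (-1) : L2) • gen 10 + (T (-2) : L2) • gen 12 := by simp only [iota, mkL_gen]; exact rfl
@[simp] lemma iotaE5 : iota (gen 5) = (T (-2) : L2) • gen 11 := by simp only [iota, mkL_gen]; exact rfl
@[simp] lemma iotaE6 : iota (gen 6) = (T (-1) : L2) • gen 10 := by simp only [iota, mkL_gen]; exact rfl
@[simp] lemma iotaE7 : iota (gen 7) = gen 7 + gen 8 := by simp only [iota, mkL_gen]; exact rfl
@[simp] lemma iotaE8 : iota (gen 8) = gen 8 := by simp only [iota, mkL_gen]; exact rfl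
@[simp] lemma iotaE9 : iota (gen 9) = gen 9 + gen 7 := by simp only [iota, mkL_gen]; exact rfl
@[simp] lemma iotaE10 : iota (gen 10) = UL • gen 6 := by simp only [iota, mkL_gen]; exact rfl
@[simp] lemma iotaE11 : iota (gen 11) = UL ^ 2 • gen 5 := by simp only [iota, mkL_gen]; exact rfl
@[simp] lemma iotaE12 : iota (gen 12) = UL ^ 2 • gen 4 + UL ^ 2 • gen 6 := by simp only [iota, mkL_gen]; exact rfl
@[simp] lemma iotaE13 : iota (gen 13) = UL ^ 3 • gen 1 := by simp only [iota, mkL_gen]; exact rfl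
@[simp] lemma iotaE14 : iota (gen 14) = UL ^ 3 • gen 2 := by simp only [iota, mkL_gen]; exact rfl
@[simp] lemma iotaE15 : iota (gen 15) = UL ^ 3 • gen 3 + UL ^ 3 • gen 1 := by simp only [iota, mkL_gen]; exact rfl
@[simp] lemma iotaE16 : iota (gen 16) = UL ^ 4 • gen 0 := by simp only [iota, mkL_gen]; exact rfl
@[simp] lemma PhiE0 : Phi (gen 0) = 0 := by simp only [Phi, mkL_gen]; exact rfl
@[simp] lemma PhiE1 : Phi (gen 1) = 0 := by simp only [Phi, mkL_gen]; exact rfl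
@[simp] lemma PhiE2 : Phi (gen 2) = 0 := by simp only [Phi, mkL_gen]; exact rfl
@[simp] lemma PhiE3 : Phi (gen 3) = UL • gen 0 := by simp only [Phi, mkL_gen]; exact rfl
@[simp] lemma PhiE4 : Phi (gen 4) = UL • gen 2 := by simp only [Phi, mkL_gen]; exact rfl
@[simp] lemma PhiE5 : Phi (gen 5) = UL • gen 1 := by simp only [Phi, mkL_gen]; exact rfl
@[simp] lemma PhiE6 : Phi (gen 6) = 0 := by simp only [Phi, mkL_gen]; exact rfl
@[simp] lemma PhiE7 : Phi (gen 7) = 0 := by simp only [Phi, mkL_gen]; exact rfl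
@[simp] lemma PhiE8 : Phi (gen 8) = 0 := by simp only [Phi, mkL_gen]; exact rfl
@[simp] lemma PhiE9 : Phi (gen 9) = UL • gen 6 := by simp only [Phi, mkL_gen]; exact rfl
@[simp] lemma PhiE10 : Phi (gen 10) = UL • gen 8 := by simp only [Phi, mkL_gen]; exact rfl
@[simp] lemma PhiE11 : Phi (gen 11) = 0 := by simp only [Phi, mkL_gen]; exact rfl
@[simp] lemma PhiE12 : Phi (gen 12) = 0 := by simp only [Phi, mkL_gen]; exact rfl
@[simp] lemma PhiE13 : Phi (gen 13) = 0 := by simp only [Phi, mkL_gen]; exact rfl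
@[simp] lemma PhiE14 : Phi (gen 14) = 0 := by simp only [Phi, mkL_gen]; exact rfl
@[simp] lemma PhiE15 : Phi (gen 15) = UL • gen 11 := by simp only [Phi, mkL_gen]; exact rfl
@[simp] lemma PhiE16 : Phi (gen 16) = UL • gen 13 := by simp only [Phi, mkL_gen]; exact rfl
@[simp] lemma PsiE0 : Psi (gen 0) = gen 1 := by simp only [Psi, mkL_gen]; exact rfl
@[simp] lemma PsiE1 : Psi (gen 1) = 0 := by simp only [Psi, mkL_gen]; exact rfl
@[simp] lemma PsiE2 : Psi (gen 2) = 0 := by simp only [Psi, mkL_gen]; exact rfl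
@[simp] lemma PsiE3 : Psi (gen 3) = gen 5 := by simp only [Psi, mkL_gen]; exact rfl
@[simp] lemma PsiE4 : Psi (gen 4) = 0 := by simp only [Psi, mkL_gen]; exact rfl
@[simp] lemma PsiE5 : Psi (gen 5) = 0 := by simp only [Psi, mkL_gen]; exact rfl
@[simp] lemma PsiE6 : Psi (gen 6) = gen 8 := by simp only [Psi, mkL_gen]; exact rfl
@[simp] lemma PsiE7 : Psi (gen 7) = 0 := by simp only [Psi, mkL_gen]; exact rfl
@[simp] lemma PsiE8 : Psi (gen 8) = 0 := by simp only [Psi, mkL_gen]; exact rfl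
@[simp] lemma PsiE9 : Psi (gen 9) = gen 10 := by simp only [Psi, mkL_gen]; exact rfl
@[simp] lemma PsiE10 : Psi (gen 10) = 0 := by simp only [Psi, mkL_gen]; exact rfl
@[simp] lemma PsiE11 : Psi (gen 11) = gen 13 := by simp only [Psi, mkL_gen]; exact rfl
@[simp] lemma PsiE12 : Psi (gen 12) = gen 14 := by simp only [Psi, mkL_gen]; exact rfl
@[simp] lemma PsiE13 : Psi (gen 13) = 0 := by simp only [Psi, mkL_gen]; exact rfl
@[simp] lemma PsiE14 : Psi (gen 14) = 0 := by simp only [Psi, mkL_gen]; exact rfl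
@[simp] lemma PsiE15 : Psi (gen 15) = gen 16 := by simp only [Psi, mkL_gen]; exact rfl
@[simp] lemma PsiE16 : Psi (gen 16) = 0 := by simp only [Psi, mkL_gen]; exact rfl

lemma memH (j : Fin 17) (k r : ℤ) (h : M j - 2*k = r) (v : Fin 17 → L2)
    (hv : v = (T k : L2) • gen j) : HomogL M r v :=
  Submodule.subset_span ⟨j, k, h, hv⟩

lemma memB (j : Fin 17) (k : ℤ) (st : ℤ × ℤ) (h1 : (P j).1 - k ≤ st.1)
    (h2 : (P j).2 - k ≤ st.2) (v : Fin 17 → L2)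
    (hv : v = (T k : L2) • gen j) : BelowL P st v :=
  Submodule.subset_span ⟨j, k, h1, h2, hv⟩

lemma homog_smul {n : ℕ} (Mv : Fin n → ℤ) (k s : ℤ) {y : Fin n → L2}
    (h : HomogL Mv s y) : HomogL Mv (s - 2*k) ((T k : L2) • y) := by
  refine Submodule.span_induction
    (p := fun x _ => HomogL Mv (s - 2*k) ((T k : L2) • x)) ?_ ?_ ?_ ?_ h
  · rintro x ⟨j, m, hm, rfl⟩
    exact Submodule.subset_span ⟨j, k + m, by omega, by rw [TT]⟩
  · show HomogL Mv (s - 2*k) ((T k : L2) • (0 : Fin n → L2))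
    rw [smul_zero]; exact Submodule.zero_mem _
  · intro x y _ _ hx hy
    show HomogL Mv (s - 2*k) ((T k : L2) • (x + y))
    rw [smul_add]; exact Submodule.add_mem _ hx hy
  · intro a x _ hx
    show HomogL Mv (s - 2*k) ((T k : L2) • a • x)
    rw [smul_comm]; exact Submodule.smul_mem _ a hx

lemma homog_map {n : ℕ} (Mv : Fin n → ℤ)
    (f : (Fin n → L2) →ₗ[L2] (Fin n → L2))
    (hf : ∀ i, HomogL Mv (Mv i) (f (gen i))) (r : ℤ) (x : Fin n → L2)
    (hx : HomogL Mv r x) : HomogL Mv r (f x) := by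
  refine Submodule.span_induction
    (p := fun x _ => HomogL Mv r (f x)) ?_ ?_ ?_ ?_ hx
  · rintro x ⟨i, k, hk, rfl⟩
    rw [map_smul]
    have := homog_smul Mv k (Mv i) (hf i)
    rwa [hk] at this
  · show HomogL Mv r (f 0)
    rw [map_zero]; exact Submodule.zero_mem _
  · intro x y _ _ hx hy
    show HomogL Mv r (f (x + y))
    rw [map_add]; exact Submodule.add_mem _ hx hy
  · intro a x _ hx
    show HomogL Mv r (f (a • x))
    rw [LinearMap.map_smul_of_tower]; exact Submodule.smul_mem _ a hx

lemma T0_smul {n : ℕ} (x : Fin n → L2) : x = (T 0 : L2) • x := by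
  rw [T_zero, one_smul]

lemma iota_homog : ∀ i : Fin 17, HomogL M (M i) (iota (gen i)) := by
  intro i; fin_cases i
  · exact memH 16 (-4) _ (by decide) _ iotaE0
  · exact memH 13 (-3) _ (by decide) _ iotaE1
  · exact memH 14 (-3) _ (by decide) _ iotaE2
  · exact memH 15 (-3) _ (by decide) _ iotaE3
  · show HomogL M (M 4) (iota (gen 4))
    rw [iotaE4]
    exact Submodule.add_mem _ (memH 10 (-1) _ (by decide) _ rfl)
      (memH 12 (-2) _ (by decide) _ rfl)
  · exact memH 11 (-2) _ (by decide) _ iotaE5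
  · exact memH 10 (-1) _ (by decide) _ iotaE6
  · show HomogL M (M 7) (iota (gen 7))
    rw [iotaE7]
    exact Submodule.add_mem _ (memH 7 0 _ (by decide) _ (T0_smul _))
      (memH 8 0 _ (by decide) _ (T0_smul _))
  · exact memH 8 0 _ (by decide) _ (iotaE8.trans (T0_smul _))
  · show HomogL M (M 9) (iota (gen 9))
    rw [iotaE9]
    exact Submodule.add_mem _ (memH 9 0 _ (by decide) _ (T0_smul _))
      (memH 7 0 _ (by decide) _ (T0_smul _))
  · exact memH 6 1 _ (by decide) _ iotaE10
  · exact memH 5 2 _ (by decide) _ (iotaE11.trans (by norm_num [UL, T_pow]))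
  · show HomogL M (M 12) (iota (gen 12))
    rw [iotaE12]
    exact Submodule.add_mem _ (memH 4 2 _ (by decide) _ (by norm_num [UL, T_pow]))
      (memH 6 2 _ (by decide) _ (by norm_num [UL, T_pow]))
  · exact memH 1 3 _ (by decide) _ (iotaE13.trans (by norm_num [UL, T_pow]))
  · exact memH 2 3 _ (by decide) _ (iotaE14.trans (by norm_num [UL, T_pow]))
  · show HomogL M (M 15) (iota (gen 15))
    rw [iotaE15]
    exact Submodule.add_mem _ (memH 3 3 _ (by decide) _ (by norm_num [UL, T_pow]))
      (memH 1 3 _ (by decide) _ (by norm_num [UL, T_pow]))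
  · exact memH 0 4 _ (by decide) _ (iotaE16.trans (by norm_num [UL, T_pow]))

lemma iota_below : ∀ i : Fin 17, BelowL P ((P i).2, (P i).1) (iota (gen i)) := by
  intro i; fin_cases i
  · exact memB 16 (-4) _ (by decide) (by decide) _ iotaE0
  · exact memB 13 (-3) _ (by decide) (by decide) _ iotaE1
  · exact memB 14 (-3) _ (by decide) (by decide) _ iotaE2
  · exact memB 15 (-3) _ (by decide) (by decide) _ iotaE3
  · show BelowL P ((P 4).2, (P 4).1) (iota (gen 4))
    rw [iotaE4]
    exact Submodule.add_mem _ (memB 10 (-1) _ (by decide) (by decide) _ rfl)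
      (memB 12 (-2) _ (by decide) (by decide) _ rfl)
  · exact memB 11 (-2) _ (by decide) (by decide) _ iotaE5
  · exact memB 10 (-1) _ (by decide) (by decide) _ iotaE6
  · show BelowL P ((P 7).2, (P 7).1) (iota (gen 7))
    rw [iotaE7]
    exact Submodule.add_mem _ (memB 7 0 _ (by decide) (by decide) _ (T0_smul _))
      (memB 8 0 _ (by decide) (by decide) _ (T0_smul _))
  · exact memB 8 0 _ (by decide) (by decide) _ (iotaE8.trans (T0_smul _))
  · show BelowL P ((P 9).2, (P 9).1) (iota (gen 9))
    rw [iotaE9]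
    exact Submodule.add_mem _ (memB 9 0 _ (by decide) (by decide) _ (T0_smul _))
      (memB 7 0 _ (by decide) (by decide) _ (T0_smul _))
  · exact memB 6 1 _ (by decide) (by decide) _ iotaE10
  · exact memB 5 2 _ (by decide) (by decide) _ (iotaE11.trans (by norm_num [UL, T_pow]))
  · show BelowL P ((P 12).2, (P 12).1) (iota (gen 12))
    rw [iotaE12]
    exact Submodule.add_mem _
      (memB 4 2 _ (by decide) (by decide) _ (by norm_num [UL, T_pow]))
      (memB 6 2 _ (by decide) (by decide) _ (by norm_num [UL, T_pow]))
  · exact memB 1 3 _ (by decide) (by decide) _ (iotaE13.trans (by norm_num [UL, T_pow]))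
  · exact memB 2 3 _ (by decide) (by decide) _ (iotaE14.trans (by norm_num [UL, T_pow]))
  · show BelowL P ((P 15).2, (P 15).1) (iota (gen 15))
    rw [iotaE15]
    exact Submodule.add_mem _
      (memB 3 3 _ (by decide) (by decide) _ (by norm_num [UL, T_pow]))
      (memB 1 3 _ (by decide) (by decide) _ (by norm_num [UL, T_pow]))
  · exact memB 0 4 _ (by decide) (by decide) _ (iotaE16.trans (by norm_num [UL, T_pow]))

lemma S2 {n : ℕ} (x : Fin n → L2) : (2:ℕ) • x = 0 := by rw [two_nsmul, A2]
lemma S4 {n : ℕ} (x : Fin n → L2) : (4:ℕ) • x = 0 := by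
  rw [show (4:ℕ) = 2+2 from rfl, add_nsmul, S2, add_zero]
lemma S6 {n : ℕ} (x : Fin n → L2) : (6:ℕ) • x = 0 := by
  rw [show (6:ℕ) = 2+4 from rfl, add_nsmul, S2, S4, add_zero]
lemma Z2 {n : ℕ} (x : Fin n → L2) : (2:ℤ) • x = 0 := by rw [two_zsmul, A2]
lemma Z4 {n : ℕ} (x : Fin n → L2) : (4:ℤ) • x = 0 := by
  rw [show (4:ℤ) = 2+2 from rfl, add_zsmul, Z2, add_zero]
lemma Z6 {n : ℕ} (x : Fin n → L2) : (6:ℤ) • x = 0 := by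
  rw [show (6:ℤ) = 2+4 from rfl, add_zsmul, Z2, Z4, add_zero]
lemma four_L2 : (4:L2) = 0 := by rw [show (4:L2) = 2*2 from by ring, two_L2, zero_mul]
lemma six_L2 : (6:L2) = 0 := by rw [show (6:L2) = 2*3 from by ring, two_L2, zero_mul]
lemma two_fun {n : ℕ} : (2 : Fin n → L2) = 0 := funext fun _ => two_L2
lemma four_fun {n : ℕ} : (4 : Fin n → L2) = 0 := funext fun _ => four_L2
lemma six_fun {n : ℕ} : (6 : Fin n → L2) = 0 := funext fun _ => six_L2

lemma dd_eq : d ∘ₗ d = 0 := by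
  apply lext; intro i; fin_cases i <;>
    simp [UL, TT, T_pow, A2, smul_add] <;>
    ((try abel_nf);
      (try simp [two_zsmul, two_nsmul, A2, two_fun, four_fun, six_fun]);
      (try rfl); (try abel))

lemma chain_eq : iota ∘ₗ d = d ∘ₗ iota := by
  apply lext; intro i; fin_cases i <;>
    simp [UL, TT, T_pow, A2, smul_add] <;>
    ((try abel_nf);
      (try simp [two_zsmul, two_nsmul, A2, two_fun, four_fun, six_fun]);
      (try rfl); (try abel))

lemma sq_eq : iota ∘ₗ iota = sigma := by
  apply lext; intro i; fin_cases i <;>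
    simp [sigma, UL, TT, T_pow, A2, smul_add] <;>
    ((try abel_nf);
      (try simp [two_zsmul, two_nsmul, A2, two_fun, four_fun, six_fun]);
      (try rfl); (try abel))

lemma sigma_vals : ∀ i : Fin 17, sigma (gen i) = iota (iota (gen i)) := by
  intro i
  have := congrArg (fun f => f (gen i)) sq_eq
  simpa using this.symm

lemma fourth_eq : iota ∘ₗ iota ∘ₗ iota ∘ₗ iota = LinearMap.id := by
  apply lext; intro i; fin_cases i <;>
    simp [UL, TT, T_pow, A2, smul_add] <;>
    ((try abel_nf);
      (try simp [two_zsmul, two_nsmul, A2, two_fun, four_fun, six_fun]);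
      (try rfl); (try abel))

theorem stmt_8 :
    -- CFK^∞(11n_57) is a chain complex
    d ∘ₗ d = 0 ∧
    -- ι is a chain map
    iota ∘ₗ d = d ∘ₗ iota ∧
    -- ι preserves the homological grading M
    (∀ (r : ℤ) (x : Fin 17 → L2), HomogL M r x → HomogL M r (iota x)) ∧
    -- ι is skew-filtered
    (∀ i : Fin 17, BelowL P ((P i).2, (P i).1) (iota (gen i))) ∧
    -- ι² = σ, the Sarkar map
    iota ∘ₗ iota = sigma ∧
    -- σ(d) = d + b, σ(j) = j + i, σ(p) = p + n, and σ = Id otherwise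
    sigma (gen 3) = gen 3 + gen 1 ∧ sigma (gen 9) = gen 9 + gen 8 ∧
    sigma (gen 15) = gen 15 + gen 13 ∧
    sigma (gen 0) = gen 0 ∧ sigma (gen 1) = gen 1 ∧ sigma (gen 2) = gen 2 ∧
    sigma (gen 4) = gen 4 ∧ sigma (gen 5) = gen 5 ∧ sigma (gen 6) = gen 6 ∧
    sigma (gen 7) = gen 7 ∧ sigma (gen 8) = gen 8 ∧ sigma (gen 10) = gen 10 ∧
    sigma (gen 11) = gen 11 ∧ sigma (gen 12) = gen 12 ∧
    sigma (gen 13) = gen 13 ∧ sigma (gen 14) = gen 14 ∧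
    sigma (gen 16) = gen 16 ∧
    -- in particular ι⁴ = Id
    iota ∘ₗ iota ∘ₗ iota ∘ₗ iota = LinearMap.id := by
  refine ⟨dd_eq, chain_eq, homog_map M iota iota_homog, iota_below, sq_eq,
    ?_, ?_, ?_, ?_, ?_, ?_, ?_, ?_, ?_, ?_, ?_, ?_, ?_, ?_, ?_, ?_, ?_, fourth_eq⟩ <;>
  rw [sigma_vals] <;> simp [UL, TT, T_pow, A2, smul_add] <;>
    ((try abel_nf);
      (try simp [two_zsmul, two_nsmul, A2, two_fun, four_fun, six_fun]);
      (try rfl); (try abel))
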